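/- arXiv:2512.08041 — 4 statements merged into one kernel-verified Lean document; each statement's English description precedes it below -/
import Mathlib

section
/- Let q ∈ ℝ with q ≠ 0, q ≠ ±1, and [n] = (q^(2n)−1)/(q²−1). Define λ_k = −((q^(−2k) + q⁴)·[k] + q^(−2k+2)·(1+q²)·[k]²) for k ∈ ℕ. Then the map k ↦ λ_k is injective on ℕ; in particular λ_k ≠ λ_j for k ≠ j. -/
/-! With `t = q²` one has `[k] = (t^k - 1)/(t - 1)`, and clearing denominators gives
`λ_k = -(t² + 1)/(t - 1)² · (t^(k+1) + t^(-k) - (t + 1))`. The prefactor is negative and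
`k ↦ t^(k+1) + t^(-k)` is strictly increasing for `0 < t ≠ 1`, since its increments are
`(t - 1)(t^(2k+2) - 1)/t^(k+1) > 0`; so `λ` is strictly decreasing, hence injective. -/

/-- The q-integer `[n] = (q^(2n) - 1)/(q^2 - 1)` (base `q²`). -/
noncomputable def qint (q : ℝ) (n : ℕ) : ℝ := (q ^ (2 * n) - 1) / (q ^ 2 - 1)

lemma sub_one_mul_pow_sub_one_pos {R : Type*} [Ring R] [LinearOrder R] [IsStrictOrderedRing R]
    {t : R} (ht : 0 < t) (ht1 : t ≠ 1) {n : ℕ} (hn : n ≠ 0) :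
    0 < (t - 1) * (t ^ n - 1) := by
  rcases ht1.lt_or_gt with hlt | hgt
  · exact mul_pos_of_neg_of_neg (sub_neg.2 hlt) (sub_neg.2 (pow_lt_one₀ ht.le hlt hn))
  · exact mul_pos (sub_pos.2 hgt) (sub_pos.2 (one_lt_pow₀ hgt hn))

lemma strictMono_pow_succ_add_inv_pow {K : Type*} [Field K] [LinearOrder K]
    [IsStrictOrderedRing K] {t : K} (ht : 0 < t) (ht1 : t ≠ 1) :
    StrictMono fun k : ℕ => t ^ (k + 1) + (t ^ k)⁻¹ := by
  refine strictMono_nat_of_lt_succ fun k => sub_pos.1 ?_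
  have hincr : t ^ (k + 1 + 1) + (t ^ (k + 1))⁻¹ - (t ^ (k + 1) + (t ^ k)⁻¹)
      = (t - 1) * (t ^ (2 * (k + 1)) - 1) / t ^ (k + 1) := by
    field_simp
    ring
  rw [hincr]
  exact div_pos (sub_one_mul_pow_sub_one_pos ht ht1 (by omega)) (pow_pos ht _)

/-- The diagonal coefficient `λ_k` of the left quantum Laplacian on `γ^k γ^{*k}`. -/
noncomputable def laplacianEigenvalue (q : ℝ) (k : ℕ) : ℝ :=
  -((q ^ (-2 * (k : ℤ)) + q ^ 4) * qint q k
    + q ^ (-2 * (k : ℤ) + 2) * (1 + q ^ 2) * (qint q k) ^ 2)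

lemma laplacianEigenvalue_eq {q : ℝ} (hq0 : q ≠ 0) (hq2 : q ^ 2 ≠ 1) (k : ℕ) :
    laplacianEigenvalue q k
      = -((q ^ 4 + 1) / (q ^ 2 - 1) ^ 2)
          * ((q ^ 2) ^ (k + 1) + ((q ^ 2) ^ k)⁻¹ - (q ^ 2 + 1)) := by
  have hneg : q ^ (-2 * (k : ℤ)) = ((q ^ 2) ^ k)⁻¹ := by
    rw [neg_mul, zpow_neg, zpow_mul, zpow_ofNat, zpow_natCast]
  have hneg2 : q ^ (-2 * (k : ℤ) + 2) = ((q ^ 2) ^ k)⁻¹ * q ^ 2 := by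
    rw [zpow_add₀ hq0, hneg, zpow_ofNat]
  have hden : q ^ 2 - 1 ≠ 0 := sub_ne_zero.2 hq2
  rw [laplacianEigenvalue, hneg, hneg2, qint, pow_mul]
  field_simp
  ring

lemma strictAnti_laplacianEigenvalue {q : ℝ} (hq0 : q ≠ 0) (hq2 : q ^ 2 ≠ 1) :
    StrictAnti (laplacianEigenvalue q) := by
  intro a b hab
  have hC : 0 < (q ^ 4 + 1) / (q ^ 2 - 1) ^ 2 := by
    have : q ^ 2 - 1 ≠ 0 := sub_ne_zero.2 hq2
    positivity
  have hg := strictMono_pow_succ_add_inv_pow (by positivity : 0 < q ^ 2) hq2 hab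
  rw [laplacianEigenvalue_eq hq0 hq2, laplacianEigenvalue_eq hq0 hq2]
  exact mul_lt_mul_of_neg_left (sub_lt_sub_right hg _) (neg_neg_of_pos hC)

/-- The eigenvalue sequence `λ_k = −((q^(−2k)+q⁴)[k] + q^(−2k+2)(1+q²)[k]²)` of the left
quantum Laplacian on `γ^k γ^{*k}` is injective in `k`. -/
theorem stmt_5 (q : ℝ) (hq0 : q ≠ 0) (hq1 : q ≠ 1) (hqm1 : q ≠ -1) :
    Function.Injective (fun k : ℕ =>
      -((q ^ (-2 * (k : ℤ)) + q ^ 4) * qint q k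
        + q ^ (-2 * (k : ℤ) + 2) * (1 + q ^ 2) * (qint q k) ^ 2)) :=
  (strictAnti_laplacianEigenvalue hq0 (by simp [sq_eq_one_iff, hq1, hqm1])).injective
end

section
/- Let q ∈ ℝ with q ≠ 0, q ≠ ±1, n ∈ ℕ with n ≥ 1, and [m] = (q^(2m)−1)/(q²−1). Define b₁ = −([n+1] + q^(2n+2) + q⁴(1+q²)[n] + q^(4+2n)(1+q²)), b₂ = −q^(−2+2n)(1+q⁴), b₃ = −q⁴[n], c₁ = −q^(−2n)((1+q²)[n] + q^(−2)(1+q²) + q⁴[n+1] + q²), c₂ = −q^(−2)(1+q⁴), c₃ = −q^(−2n)[n]. Then b₁c₂ + b₂c₃ − b₂c₁ − b₃c₂ ≠ 0. -/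
lemma qint_eq_geom_sum {q : ℝ} (hq : q ^ 2 ≠ 1) (m : ℕ) :
    qint q m = ∑ i ∈ Finset.range m, (q ^ 2) ^ i := by
  rw [geom_sum_eq hq, qint, pow_mul]

lemma one_add_sq_le_qint {q : ℝ} (hq : q ^ 2 ≠ 1) {m : ℕ} (hm : 2 ≤ m) :
    1 + q ^ 2 ≤ qint q m :=
  calc 1 + q ^ 2 = ∑ i ∈ Finset.range 2, (q ^ 2) ^ i := by simp [Finset.sum_range_succ]
    _ ≤ ∑ i ∈ Finset.range m, (q ^ 2) ^ i :=
        Finset.sum_le_sum_of_subset_of_nonneg (Finset.range_subset_range.mpr hm)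
          fun _ _ _ => by positivity
    _ = qint q m := (qint_eq_geom_sum hq m).symm

lemma qint_add_two_mul_sub_pos {q : ℝ} (hq : q ^ 2 ≠ 1) (n : ℕ) :
    0 < (q ^ 4 + q ^ 2 + 1) * qint q (n + 2) - q ^ 4 - q ^ 2 := by
  have h := mul_le_mul_of_nonneg_left (one_add_sq_le_qint hq (Nat.le_add_left 2 n))
    (by positivity : (0 : ℝ) ≤ q ^ 4 + q ^ 2 + 1)
  have hpos : 0 < (1 + q ^ 2) * (1 + q ^ 4) := by positivity
  linarith

theorem stmt_8_general (q : ℝ) (hq0 : q ≠ 0) (hq1 : q ≠ 1) (hqm1 : q ≠ -1)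
    (n : ℕ) :
    let b1 : ℝ := -(qint q (n + 1) + q ^ (2 * (n : ℤ) + 2) + q ^ 4 * (1 + q ^ 2) * qint q n
      + q ^ (4 + 2 * (n : ℤ)) * (1 + q ^ 2))
    let b2 : ℝ := -(q ^ (-2 + 2 * (n : ℤ)) * (1 + q ^ 4))
    let b3 : ℝ := -(q ^ 4 * qint q n)
    let c1 : ℝ := -(q ^ (-2 * (n : ℤ)) * ((1 + q ^ 2) * qint q n
      + q ^ (-2 : ℤ) * (1 + q ^ 2) + q ^ 4 * qint q (n + 1) + q ^ 2))
    let c2 : ℝ := -(q ^ (-2 : ℤ) * (1 + q ^ 4))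
    let c3 : ℝ := -(q ^ (-2 * (n : ℤ)) * qint q n)
    b1 * c2 + b2 * c3 - b2 * c1 - b3 * c2 ≠ 0 := by
  intro b1 b2 b3 c1 c2 c3
  have hq2 : q ^ 2 ≠ 1 := by simp [sq_eq_one_iff, hq1, hqm1]
  have hcomm : b1 * c2 + b2 * c3 - b2 * c1 - b3 * c2 =
      (q ^ 4 + 1) * (q ^ 2 - 1) * ((q ^ 4 + q ^ 2 + 1) * qint q (n + 2) - q ^ 4 - q ^ 2)
        / q ^ 4 := by
    have hd : q ^ 2 - 1 ≠ 0 := sub_ne_zero.mpr hq2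
    simp only [b1, b2, b3, c1, c2, c3, qint, zpow_add₀ hq0, zpow_neg, zpow_mul, zpow_natCast,
      zpow_ofNat, inv_pow, pow_add, pow_mul]
    field_simp
    ring
  rw [hcomm]
  exact div_ne_zero (mul_ne_zero (mul_ne_zero (by positivity) (sub_ne_zero.mpr hq2))
    (qint_add_two_mul_sub_pos hq2 n).ne') (by positivity)

/-- Non-vanishing of the commutator coefficient of the two quantum gauge Laplacians on the
invariant subspace spanned by `αⁿγγ*` and `αⁿ`. -/
theorem stmt_8 (q : ℝ) (hq0 : q ≠ 0) (hq1 : q ≠ 1) (hqm1 : q ≠ -1)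
    (n : ℕ) (hn : 1 ≤ n) :
    let b1 : ℝ := -(qint q (n + 1) + q ^ (2 * (n : ℤ) + 2) + q ^ 4 * (1 + q ^ 2) * qint q n
      + q ^ (4 + 2 * (n : ℤ)) * (1 + q ^ 2))
    let b2 : ℝ := -(q ^ (-2 + 2 * (n : ℤ)) * (1 + q ^ 4))
    let b3 : ℝ := -(q ^ 4 * qint q n)
    let c1 : ℝ := -(q ^ (-2 * (n : ℤ)) * ((1 + q ^ 2) * qint q n
      + q ^ (-2 : ℤ) * (1 + q ^ 2) + q ^ 4 * qint q (n + 1) + q ^ 2))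
    let c2 : ℝ := -(q ^ (-2 : ℤ) * (1 + q ^ 4))
    let c3 : ℝ := -(q ^ (-2 * (n : ℤ)) * qint q n)
    b1 * c2 + b2 * c3 - b2 * c1 - b3 * c2 ≠ 0 :=
  stmt_8_general q hq0 hq1 hqm1 n
end

section
/- Let G = ℂ[z, z⁻¹] be the *-Hopf algebra of Laurent polynomials with Δ(z) = z⊗z, ε(z) = 1, S(z) = z*, z* = z⁻¹, and let q ∈ ℝ, q ≠ 0, ±1. Let R' ⊆ Ker(ε) be the right ideal generated by q²z + z* − (1+q²)·1. Then in the quotient u_q(1)# := Ker(ε)/R', with π'(g) denoting the class of g − ε(g)·1, one has q²π'(z^{n+1}) + π'(z^{n−1}) − (1+q²)π'(z^n) = 0 for all n ∈ ℤ, the quotient u_q(1)# is one-dimensional spanned by π'(z), and π'(z*) = −q²π'(z). -/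
/-!
Write `r = q²` and `R' = (g₀)` with `g₀ = r z + z⁻¹ − (1 + r)`. Multiplying `g₀` by `zⁿ` gives
exactly the recursion element, since the constant terms cancel. The recursion, read forwards
(dividing by `r ≠ 0`) and backwards, shows that every `zⁿ − 1` lies in `R' + ℂ(z − 1)`, and
`Ker ε` is spanned by the `zⁿ − 1`. Finally `g₀ = z⁻¹(r z − 1)(z − 1)` vanishes at `z = r⁻¹`
while `z − 1` does not when `r ≠ 1`, so `π'(z) ≠ 0`.
-/

/-- The group-like element `z^n` in the Laurent polynomial algebra `ℂ[z,z⁻¹]`,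
realized as `AddMonoidAlgebra ℂ ℤ`. -/
noncomputable def zn (n : ℤ) : AddMonoidAlgebra ℂ ℤ := AddMonoidAlgebra.single n 1

/-- The counit `ε` of `ℂ[z,z⁻¹]` (sum of coefficients, i.e. evaluation at `z = 1`). -/
noncomputable def counitL (p : AddMonoidAlgebra ℂ ℤ) : ℂ := Finsupp.sum p.coeff fun _ c => c

open LaurentPolynomial

theorem Submodule.mem_of_recurrence {K V : Type*} [DivisionRing K] [AddCommGroup V]
    [Module K V] (M : Submodule K V) {X : ℤ → V} {a b : K} (ha : a ≠ 0) (h0 : X 0 ∈ M)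
    (h1 : X 1 ∈ M) (hrec : ∀ n, a • X (n + 1) + X (n - 1) - b • X n ∈ M) (n : ℤ) : X n ∈ M := by
  suffices ∀ n, X n ∈ M ∧ X (n + 1) ∈ M from (this n).1
  intro n
  induction n using Int.induction_on with
  | zero => exact ⟨h0, h1⟩
  | succ i ih =>
    refine ⟨ih.2, (M.smul_mem_iff ha).mp ?_⟩
    convert M.add_mem (M.sub_mem (hrec (i + 1)) ih.1) (M.smul_mem b ih.2) using 1
    simp only [add_sub_cancel_right]
    abel
  | pred i ih =>
    refine ⟨?_, by simpa using ih.1⟩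
    convert M.add_mem (M.sub_mem (hrec (-i)) (M.smul_mem a ih.2)) (M.smul_mem b ih.1) using 1
    abel

lemma zn_eq_T (n : ℤ) : zn n = T n := rfl

/-- The generator of `R'`, for `r = q²`. -/
noncomputable def rprimeGenerator (r : ℂ) : AddMonoidAlgebra ℂ ℤ :=
  r • zn 1 + zn (-1) - (1 + r) • 1

lemma zn_neg_one_sub_one_add_smul (r : ℂ) :
    zn (-1) - 1 + r • (zn 1 - 1) = rprimeGenerator r := by
  rw [rprimeGenerator]
  module

lemma zn_mul_rprimeGenerator (r : ℂ) (n : ℤ) :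
    zn n * rprimeGenerator r =
      r • (zn (n + 1) - 1) + (zn (n - 1) - 1) - (1 + r) • (zn n - 1) := by
  simp only [rprimeGenerator, zn_eq_T, mul_sub, mul_add, mul_smul_comm, ← T_add, T_sub, mul_one]
  module

lemma eval₂_rprimeGenerator {r : ℂ} (hr0 : r ≠ 0) :
    eval₂ (RingHom.id ℂ) (Units.mk0 r hr0)⁻¹ (rprimeGenerator r) = 0 := by
  simp [rprimeGenerator, zn_eq_T, smul_eq_C_mul, hr0]

lemma zn_one_sub_one_notMem_span {r : ℂ} (hr0 : r ≠ 0) (hr1 : r ≠ 1) :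
    zn 1 - 1 ∉ Ideal.span {rprimeGenerator r} := by
  intro h
  obtain ⟨f, hf⟩ := Ideal.mem_span_singleton'.mp h
  have := congrArg (eval₂ (RingHom.id ℂ) (Units.mk0 r hr0)⁻¹) hf
  rw [map_mul, eval₂_rprimeGenerator, mul_zero] at this
  simp only [zn_eq_T, map_sub, eval₂_T, map_one, zpow_one, Units.val_inv_eq_inv_val,
    Units.val_mk0] at this
  exact hr1 (inv_eq_one.mp (sub_eq_zero.mp this.symm))

lemma eq_sum_smul_zn_sub_one {g : AddMonoidAlgebra ℂ ℤ} (hg : counitL g = 0) :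
    g = ∑ n ∈ g.coeff.support, g.coeff n • (zn n - 1) := by
  have hsum : ∑ n ∈ g.coeff.support, g.coeff n = 0 := hg
  simp only [smul_sub, Finset.sum_sub_distrib, ← Finset.sum_smul, hsum, zero_smul, sub_zero]
  conv_lhs => rw [← AddMonoidAlgebra.sum_coeff_single g]
  simp only [Finsupp.sum, zn, AddMonoidAlgebra.smul_single', mul_one]

lemma mem_span_zn_sub_one_of_counitL_eq_zero {g : AddMonoidAlgebra ℂ ℤ} (hg : counitL g = 0) :
    g ∈ Submodule.span ℂ (Set.range fun n : ℤ => zn n - 1) := by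
  rw [eq_sum_smul_zn_sub_one hg]
  exact Submodule.sum_mem _ fun n _ => Submodule.smul_mem _ _ (Submodule.subset_span ⟨n, rfl⟩)

lemma zn_sub_one_mem_sup_span {r : ℂ} (hr0 : r ≠ 0) (n : ℤ) :
    zn n - 1 ∈ (Ideal.span {rprimeGenerator r}).restrictScalars ℂ ⊔ ℂ ∙ (zn 1 - 1) := by
  refine Submodule.mem_of_recurrence (X := fun n => zn n - 1) (b := 1 + r) _ hr0 ?_ ?_
    (fun n => ?_) n
  · simp [zn_eq_T]
  · exact Submodule.mem_sup_right (Submodule.mem_span_singleton_self _)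
  · refine Submodule.mem_sup_left ?_
    rw [Submodule.restrictScalars_mem, ← zn_mul_rprimeGenerator]
    exact Ideal.mul_mem_left _ _ (Ideal.subset_span rfl)

lemma exists_sub_smul_mem_span {r : ℂ} (hr0 : r ≠ 0) {g : AddMonoidAlgebra ℂ ℤ}
    (hg : counitL g = 0) : ∃ c : ℂ, g - c • (zn 1 - 1) ∈ Ideal.span {rprimeGenerator r} := by
  have hle := Submodule.span_le.mpr (Set.range_subset_iff.mpr (zn_sub_one_mem_sup_span hr0))
  obtain ⟨y, hy, w, hw, rfl⟩ :=
    Submodule.mem_sup.mp (hle (mem_span_zn_sub_one_of_counitL_eq_zero hg))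
  obtain ⟨c, rfl⟩ := Submodule.mem_span_singleton.mp hw
  exact ⟨c, by simpa using hy⟩

/-- `π'(g)` is represented by `g − ε(g)·1`, so each assertion is a membership in `R'`. -/
theorem stmt_11 (q : ℝ) (hq0 : q ≠ 0) (hq1 : q ≠ 1) (hqm1 : q ≠ -1) :
    let R' : Ideal (AddMonoidAlgebra ℂ ℤ) :=
      Ideal.span {((q : ℂ) ^ 2) • zn 1 + zn (-1) - ((1 : ℂ) + (q : ℂ) ^ 2) • (1 : AddMonoidAlgebra ℂ ℤ)}
    (∀ n : ℤ, ((q : ℂ) ^ 2) • (zn (n + 1) - 1) + (zn (n - 1) - 1)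
        - ((1 : ℂ) + (q : ℂ) ^ 2) • (zn n - 1) ∈ R') ∧
      (∀ g : AddMonoidAlgebra ℂ ℤ, counitL g = 0 → ∃ c : ℂ, g - c • (zn 1 - 1) ∈ R') ∧
      zn 1 - 1 ∉ R' ∧
      (zn (-1) - 1) + ((q : ℂ) ^ 2) • (zn 1 - 1) ∈ R' := by
  intro R'
  have hr0 : (q : ℂ) ^ 2 ≠ 0 := by exact_mod_cast pow_ne_zero 2 hq0
  have hr1 : (q : ℂ) ^ 2 ≠ 1 := by
    rw [Ne, sq_eq_one_iff]
    exact_mod_cast not_or.mpr ⟨hq1, hqm1⟩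
  refine ⟨fun n => ?_, fun _ => exists_sub_smul_mem_span hr0,
    zn_one_sub_one_notMem_span hr0 hr1, ?_⟩
  · rw [← zn_mul_rprimeGenerator]
    exact Ideal.mul_mem_left _ _ (Ideal.subset_span rfl)
  · rw [zn_neg_one_sub_one_add_smul]
    exact Ideal.subset_span rfl
end

section
/- Let q ∈ ℝ, q ≠ 0, ±1, and n ∈ ℕ. In SU_q(1,1), the product α^{*n}·α^n equals a polynomial in ρ = γγ* of the form 1 + f₁ρ + f₂ρ² + ⋯ + f_nρⁿ for some coefficients f_i ∈ ℝ (polynomials in q), with constant term 1. Consequently the n+1 elements α^{*n}α^n, γ*α^{*(n−1)}α^{n−1}γ, …, γ^{*n}γ^n, expressed as polynomials in ρ, form an upper-triangular system with units on the diagonal, hence there exist unique scalars r₁,…,r_n with α^{*n}α^n + r₁·γ*α^{*(n−1)}α^{n−1}γ + ⋯ + r_n·γ^{*n}γ^n = 1. -/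
/-!
Write `ρ = γγ*`. The relations give `α*α = 1 + ρ` and `ρα = q⁻² αρ`, so pushing `ρ` through
powers of `α` yields `α*ᵐαᵐ = ∏_{k<m} (1 + q⁻²ᵏρ)`, a polynomial `Pₘ(ρ)` of degree `≤ m` with
constant term `1`. Since `γ*` commutes with `ρ` and `γ*ʲγʲ = ρʲ`, the element
`γ*ʲα*ⁿ⁻ʲαⁿ⁻ʲγʲ` is `ρʲPₙ₋ⱼ(ρ)`. The polynomials `XʲPₙ₋ⱼ`, `j ≤ n`, have unitriangular coefficient
matrix, hence form a basis of the polynomials of degree `≤ n`; expanding `1` in it, the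
coefficient of `Pₙ` is forced to be `1`. The powers of `ρ` being independent, this transfers to
`SU_q(1,1)`.
-/

open Polynomial

section TwistedCommutation

variable {R A : Type*} [CommRing R] [Ring A] [Algebra R A]

theorem mul_pow_eq_smul_pow_mul {ρ a : A} {t : R} (h : ρ * a = t • (a * ρ)) (m : ℕ) :
    ρ * a ^ m = t ^ m • (a ^ m * ρ) := by
  induction m with
  | zero => simp
  | succ m ih =>
    rw [pow_succ, ← mul_assoc, ih, smul_mul_assoc, mul_assoc, h, mul_smul_comm, smul_smul,
      ← mul_assoc, pow_succ]

end TwistedCommutation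

namespace Polynomial

variable {R : Type*} [CommRing R]

/-- The `q`-Pochhammer symbol `(-X; t)ₘ`. -/
noncomputable def qPochhammer (t : R) (m : ℕ) : R[X] :=
  ∏ k ∈ Finset.range m, (1 + C (t ^ k) * X)

theorem qPochhammer_succ (t : R) (m : ℕ) :
    qPochhammer t (m + 1) = qPochhammer t m * (1 + C (t ^ m) * X) :=
  Finset.prod_range_succ _ _

theorem coeff_zero_qPochhammer (t : R) (m : ℕ) : (qPochhammer t m).coeff 0 = 1 := by
  simp [qPochhammer, coeff_zero_eq_eval_zero, eval_prod]

theorem natDegree_qPochhammer_le (t : R) (m : ℕ) : (qPochhammer t m).natDegree ≤ m := by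
  induction m with
  | zero => simp [qPochhammer]
  | succ m ih =>
    rw [qPochhammer_succ]
    refine natDegree_mul_le.trans (add_le_add ih ?_)
    compute_degree

variable {A : Type*} [Ring A] [Algebra R A]

theorem pow_mul_pow_eq_aeval_qPochhammer {s a ρ : A} {t : R} (hsa : s * a = 1 + ρ)
    (hρa : ρ * a = t • (a * ρ)) (m : ℕ) :
    s ^ m * a ^ m = aeval ρ (qPochhammer t m) := by
  induction m with
  | zero => simp [qPochhammer]
  | succ m ih =>
    calc s ^ (m + 1) * a ^ (m + 1) = s ^ m * (s * a) * a ^ m := by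
          rw [pow_succ, pow_succ', mul_assoc, mul_assoc, mul_assoc]
      _ = s ^ m * a ^ m + t ^ m • (s ^ m * a ^ m * ρ) := by
          rw [hsa, mul_add, mul_one, add_mul, mul_assoc, mul_pow_eq_smul_pow_mul hρa,
            mul_smul_comm, mul_assoc]
      _ = aeval ρ (qPochhammer t (m + 1)) := by
          rw [ih, qPochhammer_succ, map_mul, map_add, map_one, map_mul, aeval_C, aeval_X,
            mul_add, mul_one, ← mul_assoc, ← Algebra.commutes, mul_assoc, ← Algebra.smul_def]

theorem pow_mul_aeval_mul_pow {x y : A} (hxy : Commute x y) (p : R[X]) (j : ℕ) :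
    x ^ j * aeval (y * x) p * y ^ j = aeval (y * x) (p * X ^ j) := by
  have hx : Commute (x ^ j) (aeval (y * x) p) :=
    Algebra.commute_of_mem_adjoin_singleton_of_commute (aeval_mem_adjoin_singleton R _)
      ((hxy.mul_right (Commute.refl x)).pow_left j)
  rw [hx.eq, mul_assoc, ← hxy.mul_pow, hxy.eq, map_mul, map_pow, aeval_X]

theorem aeval_eq_one_add_sum {p : R[X]} {n : ℕ} (h0 : p.coeff 0 = 1) (hdeg : p.natDegree ≤ n)
    (ρ : A) : aeval ρ p = 1 + ∑ i : Fin n, p.coeff (i + 1) • ρ ^ ((i : ℕ) + 1) := by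
  rw [aeval_eq_sum_range' (Nat.lt_succ_of_le hdeg), Finset.sum_range_succ', h0, one_smul,
    pow_zero, add_comm, Fin.sum_univ_eq_sum_range (fun i => p.coeff (i + 1) • ρ ^ (i + 1))]

theorem aeval_injective_of_linearIndependent_pow {ρ : A}
    (h : LinearIndependent R fun i : ℕ => ρ ^ i) : Function.Injective (aeval (R := R) ρ) := by
  have hpow (i : ℕ) : (Algebra.lmul R A ρ ^ i) 1 = ρ ^ i := by
    rw [← map_pow, Algebra.coe_lmul_eq_mul, LinearMap.mul_apply', mul_one]
  have haeval (p : R[X]) : aeval (Algebra.lmul R A ρ) p 1 = aeval ρ p := by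
    rw [aeval_algHom_apply, Algebra.coe_lmul_eq_mul, LinearMap.mul_apply', mul_one]
  rw [injective_iff_map_eq_zero]
  simp_rw [← hpow, linearIndependent_powers_iff_aeval, haeval] at h
  exact h

theorem existsUnique_sum_smul_eq_of_unitriangular {n : ℕ} (w : Fin (n + 1) → R[X])
    (hdeg : ∀ j, (w j).natDegree ≤ n) (hlow : ∀ i j : Fin (n + 1), i < j → (w j).coeff i = 0)
    (hdiag : ∀ j : Fin (n + 1), (w j).coeff j = 1) {p : R[X]} (hp : p.natDegree ≤ n) :
    ∃! c : Fin (n + 1) → R, ∑ j, c j • w j = p := by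
  let M : Matrix (Fin (n + 1)) (Fin (n + 1)) R := .of fun i j => (w j).coeff i
  have hM : IsUnit M := by
    rw [Matrix.isUnit_iff_isUnit_det, Matrix.det_of_isLowerTriangular M fun i j => hlow i j]
    simp [M, hdiag]
  have hiff (c : Fin (n + 1) → R) :
      ∑ j, c j • w j = p ↔ M.mulVec c = fun i : Fin (n + 1) => p.coeff i := by
    have hsum : (∑ j, c j • w j).natDegree ≤ n :=
      natDegree_sum_le_of_forall_le _ _ fun j _ => (natDegree_smul_le _ _).trans (hdeg j)
    rw [ext_iff_natDegree_le hsum hp, funext_iff, Fin.forall_iff]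
    simp [M, Matrix.mulVec, dotProduct, finsetSum_coeff, mul_comm]
  exact (existsUnique_congr hiff).2
    (Function.Bijective.existsUnique
      ⟨Matrix.mulVec_injective_of_isUnit hM, Matrix.mulVec_surjective_iff_isUnit.2 hM⟩ _)

theorem existsUnique_add_sum_smul_mul_X_pow_eq_one {P : ℕ → R[X]} (h0 : ∀ k, (P k).coeff 0 = 1)
    (hdeg : ∀ k, (P k).natDegree ≤ k) (n : ℕ) :
    ∃! r : Fin n → R, P n + ∑ i : Fin n, r i • (P (n - (i + 1)) * X ^ ((i : ℕ) + 1)) = 1 := by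
  let w : Fin (n + 1) → R[X] := fun j => P (n - j) * X ^ (j : ℕ)
  have hw (c : Fin (n + 1) → R) : ∑ j, c j • w j =
      c 0 • P n + ∑ i : Fin n, c i.succ • (P (n - (i + 1)) * X ^ ((i : ℕ) + 1)) := by
    simp [w, Fin.sum_univ_succ]
  have hwdeg (j) : (w j).natDegree ≤ n :=
    natDegree_mul_le.trans ((add_le_add (hdeg _) (natDegree_X_pow_le _)).trans (by omega))
  have hwlow (i j : Fin (n + 1)) (hij : i < j) : (w j).coeff i = 0 := by
    simp [w, coeff_mul_X_pow', not_le.2 hij]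
  have hwdiag (j : Fin (n + 1)) : (w j).coeff j = 1 := by
    simp [w, coeff_mul_X_pow', h0]
  obtain ⟨c, hc, hc_unique⟩ :=
    existsUnique_sum_smul_eq_of_unitriangular w hwdeg hwlow hwdiag (p := 1) (by simp)
  have hc0 : c 0 = 1 := by
    simpa [hw, coeff_mul_X_pow', h0] using congr_arg (coeff · 0) hc
  refine ⟨Fin.tail c, ?_, fun r hr => ?_⟩
  · simpa [hw, hc0, Fin.tail] using hc
  · have := hc_unique (Fin.cons 1 r) (by simpa [hw] using hr)
    rw [← this, Fin.tail_cons]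

end Polynomial

theorem stmt_16_general (q : ℝ) (hq0 : q ≠ 0) (n : ℕ)
    (A : Type*) [Ring A] [StarRing A] [Algebra ℝ A]
    (a g : A)
    (h1 : star a * a - star g * g = 1)
    (h3 : g * star g = star g * g)
    (h4 : q • (g * a) = a * g)
    (h5 : q • (star g * a) = a * star g)
    (hindep : LinearIndependent ℝ fun i : ℕ => (g * star g) ^ i) :
    (∃ f : Fin n → ℝ,
        (star a) ^ n * a ^ n = 1 + ∑ i : Fin n, f i • (g * star g) ^ ((i : ℕ) + 1)) ∧
      (∃! r : Fin n → ℝ,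
        (star a) ^ n * a ^ n
          + ∑ i : Fin n, r i •
              ((star g) ^ ((i : ℕ) + 1)
                * ((star a) ^ (n - ((i : ℕ) + 1)) * a ^ (n - ((i : ℕ) + 1)))
                * g ^ ((i : ℕ) + 1)) = 1) := by
  have hsa : star a * a = 1 + g * star g := by
    rw [h3]
    exact sub_eq_iff_eq_add.mp h1
  have hρa : g * star g * a = (q ^ 2)⁻¹ • (a * (g * star g)) := by
    have haρ : a * (g * star g) = q ^ 2 • (g * star g * a) := by
      rw [← mul_assoc, ← h4, smul_mul_assoc, mul_assoc, ← h5, mul_smul_comm, smul_smul, sq,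
        mul_assoc]
    rw [haρ, smul_smul, inv_mul_cancel₀ (pow_ne_zero 2 hq0), one_smul]
  have hval := pow_mul_pow_eq_aeval_qPochhammer hsa hρa
  refine ⟨⟨_, (hval n).trans (aeval_eq_one_add_sum (coeff_zero_qPochhammer _ n)
    (natDegree_qPochhammer_le _ n) _)⟩, ?_⟩
  simp_rw [hval, pow_mul_aeval_mul_pow h3.symm, ← map_smul, ← map_sum, ← map_add,
    (aeval_injective_of_linearIndependent_pow hindep).eq_iff' (map_one _)]
  exact existsUnique_add_sum_smul_mul_X_pow_eq_one (coeff_zero_qPochhammer _)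
    (natDegree_qPochhammer_le _) n

/-- In `SU_q(1,1)`, `α^{*n}α^n` is a polynomial in `ρ = γγ*` with constant term `1`, and by
triangular inversion there are unique scalars `r₁,…,r_n` with
`α^{*n}α^n + Σ_j r_j · γ^{*j}α^{*(n−j)}α^{n−j}γ^j = 1`.  (The powers of `ρ` are linearly
independent in `SU_q(1,1)`, which is recorded as a hypothesis.) -/
theorem stmt_16 (q : ℝ) (hq0 : q ≠ 0) (hq1 : q ≠ 1) (hqm1 : q ≠ -1) (n : ℕ)
    (A : Type*) [Ring A] [StarRing A] [Algebra ℝ A] [StarModule ℝ A]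
    (a g : A)
    (h1 : star a * a - star g * g = 1)
    (h2 : a * star a - (q ^ 2) • (g * star g) = 1)
    (h3 : g * star g = star g * g)
    (h4 : q • (g * a) = a * g)
    (h5 : q • (star g * a) = a * star g)
    (hindep : LinearIndependent ℝ fun i : ℕ => (g * star g) ^ i) :
    (∃ f : Fin n → ℝ,
        (star a) ^ n * a ^ n = 1 + ∑ i : Fin n, f i • (g * star g) ^ ((i : ℕ) + 1)) ∧
      (∃! r : Fin n → ℝ,
        (star a) ^ n * a ^ n
          + ∑ i : Fin n, r i •
              ((star g) ^ ((i : ℕ) + 1)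
                * ((star a) ^ (n - ((i : ℕ) + 1)) * a ^ (n - ((i : ℕ) + 1)))
                * g ^ ((i : ℕ) + 1)) = 1) :=
  stmt_16_general q hq0 n A a g h1 h3 h4 h5 hindep
end
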